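/- If m > n, then m² · ( ∑_{u=1}^U ‖P_u − Q_u‖₁ )² / ( ∑_{u=1}^U ∑_{i=1}^n f_{u,i} ) ≥ min( m^{3/2} · ∑_{u=1}^U ‖P_u − Q_u‖₁ / (2·√(U·n)), m² · ( ∑_{u=1}^U ‖P_u − Q_u‖₁ )² / (6·U·n) ), where ‖P_u − Q_u‖₁ = ∑_{i=1}^n |P_{u,i} − Q_{u,i}|. -/

import Mathlib

/-!
Each `f_{u,i}` is at most `√(mn)·|P_{u,i} − Q_{u,i}| + n·(P_{u,i} + Q_{u,i}) + 1`, so with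
`S = ∑_u ‖P_u − Q_u‖₁` the denominator is at most `√(mn)·S + 3Un`, hence at most twice the larger
of these two terms. If `√(mn)·S` is the larger one, the quotient is at least `m^{3/2}·S / (2√n)`;
otherwise it is at least `m²S² / (6Un)`.
-/

open NNReal

/-- The deterministic normalizing quantity `f_{u,i}` (with `p = P_{u,i}`, `q = Q_{u,i}`):
`max{√(mn)·|p−q|, n·(p+q), 1}` if `m > n`, and `max{m·(p+q), 1}` otherwise. -/
noncomputable def fui (m n : ℕ) (p q : ℝ) : ℝ :=
  if n < m then max (max (Real.sqrt (m * n) * |p - q|) ((n : ℝ) * (p + q))) 1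
  else max ((m : ℝ) * (p + q)) 1

open Finset

lemma min_div_le_div_of_le_add {x A B F : ℝ} (hx : 0 ≤ x) (hF : 0 < F) (hFAB : F ≤ A + B) :
    min (x / (2 * A)) (x / (2 * B)) ≤ x / F := by
  rcases le_total A B with h | h
  · exact (min_le_right _ _).trans (div_le_div_of_nonneg_left hx hF (by linarith))
  · exact (min_le_left _ _).trans (div_le_div_of_nonneg_left hx hF (by linarith))

lemma one_le_fui (m n : ℕ) (p q : ℝ) : 1 ≤ fui m n p q := by
  unfold fui
  split_ifs <;> exact le_max_right _ _

lemma fui_le_of_lt {m n : ℕ} (hmn : n < m) {p q : ℝ} (hp : 0 ≤ p) (hq : 0 ≤ q) :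
    fui m n p q ≤ √(m * n) * |p - q| + n * (p + q) + 1 := by
  have hd : 0 ≤ √(m * n) * |p - q| := by positivity
  have hs : 0 ≤ (n : ℝ) * (p + q) := by positivity
  rw [fui, if_pos hmn]
  exact max_le (max_le (by linarith) (by linarith)) (by linarith)

lemma sum_fui_le {m n : ℕ} (hmn : n < m) {p q : Fin n → ℝ} (hp0 : ∀ i, 0 ≤ p i)
    (hq0 : ∀ i, 0 ≤ q i) (hp : ∑ i, p i = 1) (hq : ∑ i, q i = 1) :
    ∑ i, fui m n (p i) (q i) ≤ √(m * n) * ∑ i, |p i - q i| + 3 * n := by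
  calc ∑ i, fui m n (p i) (q i)
      ≤ ∑ i, (√(m * n) * |p i - q i| + n * (p i + q i) + 1) :=
        sum_le_sum fun i _ => fui_le_of_lt hmn (hp0 i) (hq0 i)
    _ = √(m * n) * ∑ i, |p i - q i| + 3 * n := by
        simp only [sum_add_distrib, ← mul_sum, hp, hq, sum_const, card_univ, Fintype.card_fin,
          nsmul_eq_mul]
        ring

lemma rpow_three_halves_mul_div_sqrt_le {U m n S : ℝ} (hU : 1 ≤ U) (hm : 0 ≤ m) (hS : 0 ≤ S) :
    m ^ ((3 : ℝ) / 2) * S / (2 * √(U * n)) ≤ m ^ 2 * S ^ 2 / (2 * (√(m * n) * S)) := by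
  have hm32 : m ^ ((3 : ℝ) / 2) = m * √m := by
    rw [show (3 : ℝ) / 2 = 1 + 1 / 2 by norm_num, Real.rpow_add' hm (by norm_num), Real.rpow_one,
      Real.sqrt_eq_rpow]
  have hcancel : m ^ 2 * S ^ 2 / (2 * (√(m * n) * S)) = m * √m * S / (2 * √n) := by
    rcases hS.eq_or_lt with rfl | hS
    · simp
    rcases hm.eq_or_lt with rfl | hm
    · simp
    rw [Real.sqrt_mul hm.le]
    field_simp
    rw [Real.sq_sqrt hm.le]
  rw [hm32, hcancel, Real.sqrt_mul (by linarith), mul_left_comm, ← div_div]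
  exact div_le_div_of_nonneg_right (div_le_self (by positivity) (Real.one_le_sqrt.mpr hU))
    (by positivity)

/-- If `m > n`, then
`m²·(∑_u ‖P_u − Q_u‖₁)² / (∑_{u,i} f_{u,i}) ≥
  min( m^{3/2}·∑_u ‖P_u − Q_u‖₁ / (2√(U·n)), m²·(∑_u ‖P_u − Q_u‖₁)² / (6·U·n) )`. -/
theorem stmt13 (U n m : ℕ) (hU : 1 ≤ U) (hn : 1 ≤ n) (hmn : n < m)
    (P Q : Fin U → Fin n → ℝ)
    (hP0 : ∀ u i, 0 ≤ P u i) (hQ0 : ∀ u i, 0 ≤ Q u i)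
    (hP : ∀ u, ∑ i, P u i = 1) (hQ : ∀ u, ∑ i, Q u i = 1) :
    min ((m : ℝ) ^ ((3 : ℝ) / 2) * (∑ u, ∑ i, |P u i - Q u i|) /
          (2 * Real.sqrt ((U : ℝ) * n)))
        ((m : ℝ) ^ 2 * (∑ u, ∑ i, |P u i - Q u i|) ^ 2 / (6 * (U : ℝ) * n)) ≤
      (m : ℝ) ^ 2 * (∑ u, ∑ i, |P u i - Q u i|) ^ 2 /
        (∑ u, ∑ i, fui m n (P u i) (Q u i)) := by
  set S := ∑ u, ∑ i, |P u i - Q u i|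
  have hS : 0 ≤ S := by positivity
  have : Nonempty (Fin U) := ⟨⟨0, hU⟩⟩
  have : Nonempty (Fin n) := ⟨⟨0, hn⟩⟩
  have hF : 0 < ∑ u, ∑ i, fui m n (P u i) (Q u i) :=
    sum_pos (fun u _ => sum_pos (fun i _ => one_pos.trans_le (one_le_fui ..)) univ_nonempty)
      univ_nonempty
  have hFle : ∑ u, ∑ i, fui m n (P u i) (Q u i) ≤ √(m * n) * S + 3 * U * n := by
    calc ∑ u, ∑ i, fui m n (P u i) (Q u i) ≤ ∑ u, (√(m * n) * ∑ i, |P u i - Q u i| + 3 * n) :=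
          sum_le_sum fun u _ => sum_fui_le hmn (hP0 u) (hQ0 u) (hP u) (hQ u)
      _ = √(m * n) * S + 3 * U * n := by
          simp only [sum_add_distrib, ← mul_sum, sum_const, card_univ, Fintype.card_fin,
            nsmul_eq_mul, S]
          ring
  calc _ ≤ min ((m : ℝ) ^ 2 * S ^ 2 / (2 * (√(m * n) * S)))
          ((m : ℝ) ^ 2 * S ^ 2 / (2 * (3 * U * n))) := by
        refine min_le_min ?_ (le_of_eq (by ring))
        exact rpow_three_halves_mul_div_sqrt_le (by exact_mod_cast hU) (by positivity) hS
    _ ≤ _ := min_div_le_div_of_le_add (by positivity) hF hFle
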